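/- arXiv:2111.07272 — 2 statements merged into one kernel-verified Lean document; each statement's English description precedes it below -/
import Mathlib

section
/- For every ℓ ∈ ℕ, k > 0 and r > 0: j_ℓ(ikr) = i^ℓ · (√π / 2^{ℓ+1}) · (kr)^ℓ · Σ_{m=0}^{∞} (kr/2)^{2m} / (m! Γ(m + ℓ + 3/2)), where Γ denotes the Gamma function; in particular the series on the right-hand side converges. -/
open Complex MeasureTheory Set

open scoped Nat

/-- The Rayleigh derivative operator `D f = x ↦ f'(x)/x`. -/
noncomputable def raylD (f : ℂ → ℂ) : ℂ → ℂ := fun x => deriv f x / x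

/-- Spherical Bessel function `j_ℓ(x) = (-x)^ℓ Dˡ(sin x / x)`. -/
noncomputable def sphJ (l : ℕ) (x : ℂ) : ℂ :=
  (-x) ^ l * (raylD^[l] (fun y => Complex.sin y / y)) x


noncomputable def bR (l m : ℕ) : ℝ :=
  2 ^ l * (m + l)! / (m ! * (2 * (m + l) + 1)!)

noncomputable def bC (l m : ℕ) : ℂ := (-1) ^ (m + l) * (bR l m : ℝ)

noncomputable def gFun (l : ℕ) (x : ℂ) : ℂ := ∑' m : ℕ, bC l m * x ^ (2 * m)

lemma bR_nonneg (l m : ℕ) : 0 ≤ bR l m := by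
  unfold bR; positivity

lemma nat_fact_ineq (l m : ℕ) :
    (m + l)! * (2 * m)! ≤ m ! * (2 * (m + l) + 1)! := by
  induction l with
  | zero =>
      simpa using Nat.mul_le_mul_left (m !) (Nat.factorial_le (by omega))
  | succ l ih =>
      have h1 : (m + (l + 1))! = (m + l + 1) * (m + l)! := by
        rw [show m + (l + 1) = (m + l) + 1 by ring, Nat.factorial_succ]
      have h2 : (2 * (m + (l + 1)) + 1)! =
          (2 * (m + l) + 3) * ((2 * (m + l) + 2) * (2 * (m + l) + 1)!) := by
        rw [show 2 * (m + (l + 1)) + 1 = (2 * (m + l) + 2) + 1 by ring,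
          Nat.factorial_succ, show 2 * (m + l) + 2 = (2 * (m + l) + 1) + 1 by ring,
          Nat.factorial_succ]
      rw [h1, h2]
      calc (m + l + 1) * (m + l)! * (2 * m)!
          = (m + l + 1) * ((m + l)! * (2 * m)!) := by ring
        _ ≤ (m + l + 1) * (m ! * (2 * (m + l) + 1)!) := Nat.mul_le_mul_left _ ih
        _ ≤ ((2 * (m + l) + 3) * (2 * (m + l) + 2)) * (m ! * (2 * (m + l) + 1)!) := by
            apply Nat.mul_le_mul_right
            nlinarith
        _ = m ! * ((2 * (m + l) + 3) * ((2 * (m + l) + 2) * (2 * (m + l) + 1)!)) := by ring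

lemma bR_le (l m : ℕ) : bR l m ≤ 2 ^ l / (2 * m)! := by
  unfold bR
  rw [div_le_div_iff₀ (by positivity) (by positivity)]
  have h : ((m + l)! * (2 * m)! : ℝ) ≤ (m ! * (2 * (m + l) + 1)! : ℝ) := by
    exact_mod_cast nat_fact_ineq l m
  calc (2:ℝ) ^ l * (m + l)! * (2 * m)! = 2 ^ l * ((m + l)! * (2 * m)!) := by ring
    _ ≤ 2 ^ l * (m ! * (2 * (m + l) + 1)!) := by
        apply mul_le_mul_of_nonneg_left h (by positivity)
    _ = 2 ^ l * (m ! * (2 * (m + l) + 1)!) := rfl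

lemma norm_bC (l m : ℕ) : ‖bC l m‖ = bR l m := by
  unfold bC
  rw [norm_mul, norm_pow, norm_neg, norm_one, one_pow, one_mul,
    Complex.norm_real, Real.norm_of_nonneg (bR_nonneg l m)]

lemma summable_even (R : ℝ) : Summable (fun m : ℕ => R ^ (2 * m) / (2 * m)!) := by
  have h := (Real.summable_pow_div_factorial R).comp_injective
    (fun a b h => by simpa using h : Function.Injective (fun m : ℕ => 2 * m))
  exact h

lemma summable_g (l : ℕ) (x : ℂ) : Summable (fun m : ℕ => bC l m * x ^ (2 * m)) := by
  apply Summable.of_norm_bounded (g := fun m => 2 ^ l * (‖x‖ ^ (2 * m) / (2 * m)!))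
  · exact (summable_even ‖x‖).mul_left _
  · intro m
    rw [norm_mul, norm_pow, norm_bC]
    calc bR l m * ‖x‖ ^ (2 * m) ≤ 2 ^ l / (2 * m)! * ‖x‖ ^ (2 * m) := by
          exact mul_le_mul_of_nonneg_right (bR_le l m) (by positivity)
      _ = 2 ^ l * (‖x‖ ^ (2 * m) / (2 * m)!) := by ring

lemma bC_rec (l m : ℕ) : (2 * (m + 1) : ℂ) * bC l (m + 1) = bC (l + 1) m := by
  unfold bC
  have hsign : ((-1 : ℂ)) ^ (m + 1 + l) = (-1) ^ (m + (l + 1)) := by ring_nf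
  have hbR : (2 * (m + 1) : ℝ) * bR l (m + 1) = bR (l + 1) m := by
    unfold bR
    have h1 : (m + 1 + l)! = (m + (l + 1))! := by ring_nf
    have h2 : ((m + 1)! : ℝ) = (m + 1) * m ! := by
      rw [Nat.factorial_succ]; push_cast; ring
    have h3 : (2 * (m + 1 + l) + 1) = (2 * (m + (l + 1)) + 1) := by ring
    rw [h1, h2, h3]
    have hm : ((m:ℝ) + 1) ≠ 0 := by positivity
    field_simp
    ring
  calc (2 * (m + 1) : ℂ) * ((-1) ^ (m + 1 + l) * (bR l (m + 1) : ℝ))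
      = (-1) ^ (m + 1 + l) * (((2 * (m + 1) : ℝ) * bR l (m + 1) : ℝ) : ℂ) := by
        push_cast; ring
    _ = (-1) ^ (m + (l + 1)) * (bR (l + 1) m : ℝ) := by rw [hsign, hbR]

lemma g_hasDerivAt (l : ℕ) (z : ℂ) : HasDerivAt (gFun l) (z * gFun (l + 1) z) z := by
  set R : ℝ := ‖z‖ + 1 with hRdef
  have hR1 : (1 : ℝ) ≤ R := by have := norm_nonneg z; linarith
  have hzR : z ∈ Metric.ball (0 : ℂ) R := by
    simp [hRdef, Metric.mem_ball]
  set u : ℕ → ℝ := fun m => 2 ^ l * (R ^ (2 * m - 1) / (2 * m - 1)!) with hudef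
  have hu : Summable u := by
    apply Summable.mul_left
    exact (Real.summable_pow_div_factorial R).comp_injective
      (fun a b h => by simp only at h; omega : Function.Injective (fun m : ℕ => 2 * m - 1))
  have key := hasDerivAt_tsum_of_isPreconnected hu (Metric.isOpen_ball)
    (convex_ball (0:ℂ) R).isPreconnected
    (g := fun m w => bC l m * w ^ (2 * m))
    (g' := fun m w => bC l m * ((2 * m : ℕ) * w ^ (2 * m - 1)))
    (fun m y _ => (hasDerivAt_pow (2 * m) y).const_mul (bC l m))
    ?_ (Metric.mem_ball_self (by positivity)) (summable_g l 0) hzR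
  · have hderiv_sum :
        (∑' m : ℕ, bC l m * ((2 * m : ℕ) * z ^ (2 * m - 1))) = z * gFun (l + 1) z := by
      have hsum : Summable (fun m : ℕ => bC l m * ((2 * m : ℕ) * z ^ (2 * m - 1))) := by
        apply Summable.of_norm_bounded hu
        intro m
        match m with
        | 0 => simp [hudef]
        | m + 1 =>
          rw [norm_mul, norm_mul, norm_pow, norm_bC, _root_.norm_natCast]
          have hzRle : ‖z‖ ≤ R := by simp [hRdef]
          calc bR l (m+1) * ((2 * (m+1) : ℕ) * ‖z‖ ^ (2 * (m+1) - 1))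
              ≤ (2 ^ l / (2 * (m+1))!) * ((2 * (m+1) : ℕ) * R ^ (2 * (m+1) - 1)) := by
                apply mul_le_mul (bR_le l (m+1))
                · apply mul_le_mul_of_nonneg_left _ (by positivity)
                  exact pow_le_pow_left₀ (norm_nonneg z) hzRle _
                · positivity
                · positivity
            _ = u (m+1) := by
                have : ((2 * (m+1))! : ℝ) = (2 * (m + 1)) * (2 * (m+1) - 1)! := by
                  rw [show 2 * (m+1) = (2 * m + 1) + 1 by ring, Nat.factorial_succ]
                  push_cast; ring_nf
                rw [hudef]
                simp only
                rw [this]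
                have h2m : ((2 * (m+1) : ℕ) : ℝ) = 2 * (m+1 : ℝ) := by push_cast; ring
                rw [h2m]
                have hne : ((2 * (m+1) - 1)! : ℝ) ≠ 0 := by positivity
                field_simp
      rw [Summable.tsum_eq_zero_add hsum]
      simp only [Nat.mul_zero, Nat.cast_zero, zero_mul, mul_zero, zero_add, Nat.cast_ofNat]
      rw [show (gFun (l+1) z) = ∑' m : ℕ, bC (l+1) m * z ^ (2 * m) from rfl, ← tsum_mul_left]
      congr 1
      funext m
      have hexp : 2 * (m + 1) - 1 = 2 * m + 1 := by omega
      rw [hexp, ← bC_rec l m]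
      push_cast
      ring
    rw [← hderiv_sum]
    exact key
  · intro m y hy
    match m with
    | 0 => simp [hudef]
    | m + 1 =>
      rw [norm_mul, norm_mul, norm_pow, norm_bC, _root_.norm_natCast]
      have hzRle : ‖y‖ ≤ R := le_of_lt (by simpa [Metric.mem_ball] using hy)
      calc bR l (m+1) * ((2 * (m+1) : ℕ) * ‖y‖ ^ (2 * (m+1) - 1))
          ≤ (2 ^ l / (2 * (m+1))!) * ((2 * (m+1) : ℕ) * R ^ (2 * (m+1) - 1)) := by
            apply mul_le_mul (bR_le l (m+1))
            · apply mul_le_mul_of_nonneg_left _ (by positivity)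
              exact pow_le_pow_left₀ (norm_nonneg y) hzRle _
            · positivity
            · positivity
        _ = u (m+1) := by
            have : ((2 * (m+1))! : ℝ) = (2 * (m + 1)) * (2 * (m+1) - 1)! := by
              rw [show 2 * (m+1) = (2 * m + 1) + 1 by ring, Nat.factorial_succ]
              push_cast; ring_nf
            rw [hudef]
            simp only
            rw [this]
            have h2m : ((2 * (m+1) : ℕ) : ℝ) = 2 * (m+1 : ℝ) := by push_cast; ring
            rw [h2m]
            have hne : ((2 * (m+1) - 1)! : ℝ) ≠ 0 := by positivity
            field_simp

lemma g_zero (z : ℂ) (hz : z ≠ 0) : Complex.sin z / z = gFun 0 z := by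
  have h := (Complex.hasSum_sin z).div_const z
  have h2 : ∀ n : ℕ, (-1 : ℂ) ^ n * z ^ (2 * n + 1) / (2 * n + 1)! / z
      = bC 0 n * z ^ (2 * n) := by
    intro n
    unfold bC bR
    have : ((n + 0)! : ℝ) = n ! := by norm_num
    rw [pow_succ]
    push_cast
    have hf : ((2 * n + 1)! : ℂ) ≠ 0 := by
      exact_mod_cast (Nat.cast_ne_zero (R := ℂ)).mpr (Nat.factorial_ne_zero _)
    have hn : ((n)! : ℂ) ≠ 0 := by
      exact_mod_cast (Nat.cast_ne_zero (R := ℂ)).mpr (Nat.factorial_ne_zero _)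
    simp only [Nat.add_zero]
    field_simp
  have h3 : HasSum (fun n : ℕ => bC 0 n * z ^ (2 * n)) (Complex.sin z / z) :=
    h.congr_fun (fun n => (h2 n).symm)
  exact h3.tsum_eq.symm

lemma iter_eq (l : ℕ) : ∀ z : ℂ, z ≠ 0 →
    (raylD^[l] (fun y => Complex.sin y / y)) z = gFun l z := by
  induction l with
  | zero => intro z hz; simpa using g_zero z hz
  | succ l ih =>
      intro z hz
      rw [Function.iterate_succ_apply']
      show deriv (raylD^[l] (fun y => Complex.sin y / y)) z / z = gFun (l + 1) z
      have hev : raylD^[l] (fun y => Complex.sin y / y) =ᶠ[nhds z] gFun l := by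
        filter_upwards [isOpen_compl_singleton.mem_nhds hz] with w hw
        exact ih w hw
      rw [hev.deriv_eq, (g_hasDerivAt l z).deriv, mul_div_cancel_left₀ _ hz]

lemma gamma_half (n : ℕ) :
    Real.Gamma ((n : ℝ) + 1 / 2) = Real.sqrt Real.pi * (2 * n)! / (4 ^ n * n !) := by
  induction n with
  | zero => simpa using Real.Gamma_one_half_eq
  | succ n ih =>
      have hcast : ((n + 1 : ℕ) : ℝ) + 1 / 2 = ((n : ℝ) + 1 / 2) + 1 := by push_cast; ring
      rw [hcast, Real.Gamma_add_one (by positivity), ih]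
      have h1 : ((2 * (n + 1))! : ℝ) = (2 * n + 2) * ((2 * n + 1) * (2 * n)!) := by
        rw [show 2 * (n + 1) = (2 * n + 1) + 1 by ring, Nat.factorial_succ,
          show 2 * n + 1 = (2 * n) + 1 by ring, Nat.factorial_succ]
        push_cast; ring
      have h2 : ((n + 1)! : ℝ) = (n + 1) * n ! := by rw [Nat.factorial_succ]; push_cast; ring
      rw [h1, h2]
      have hne1 : ((n)! : ℝ) ≠ 0 := by positivity
      have hne2 : ((n : ℝ) + 1) ≠ 0 := by positivity
      field_simp
      ring

/-- the series representation
`j_ℓ(ikr) = i^ℓ (√π / 2^{ℓ+1}) (kr)^ℓ Σ_{m=0}^∞ (kr/2)^{2m} / (m! Γ(m+ℓ+3/2))`,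
the series being summable. -/
theorem stmt_16 (l : ℕ) (k r : ℝ) (hk : 0 < k) (hr : 0 < r) :
    Summable (fun m : ℕ =>
      ((k * r / 2 : ℝ) : ℂ) ^ (2 * m)
        / ((m.factorial : ℂ) * (Real.Gamma ((m : ℝ) + l + 3 / 2) : ℂ))) ∧
    sphJ l (Complex.I * k * r)
      = Complex.I ^ l * ((Real.sqrt Real.pi : ℂ) / 2 ^ (l + 1)) * ((k * r : ℝ) : ℂ) ^ l *
          ∑' m : ℕ,
            ((k * r / 2 : ℝ) : ℂ) ^ (2 * m)
              / ((m.factorial : ℂ) * (Real.Gamma ((m : ℝ) + l + 3 / 2) : ℂ)) := by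
  set z : ℂ := Complex.I * k * r with hzdef
  have hz : z ≠ 0 := by
    simp [hzdef, Complex.I_ne_zero, hk.ne', hr.ne', Complex.ofReal_ne_zero]
  set C : ℂ := Complex.I ^ l * ((Real.sqrt Real.pi : ℂ) / 2 ^ (l + 1)) * ((k * r : ℝ) : ℂ) ^ l
    with hCdef
  set T : ℕ → ℂ := fun m => ((k * r / 2 : ℝ) : ℂ) ^ (2 * m)
      / ((m.factorial : ℂ) * (Real.Gamma ((m : ℝ) + l + 3 / 2) : ℂ)) with hTdef
  have hsqrt : Real.sqrt Real.pi ≠ 0 := (Real.sqrt_pos.mpr Real.pi_pos).ne'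
  have hterm : ∀ m : ℕ, (-z) ^ l * (bC l m * z ^ (2 * m)) = C * T m := by
    intro m
    have hGammaArg : ((m : ℝ) + l + 3 / 2) = ((m + l + 1 : ℕ) : ℝ) + 1 / 2 := by
      push_cast; ring
    have hGamma : Real.Gamma ((m : ℝ) + l + 3 / 2)
        = Real.sqrt Real.pi * (2 * (m + l + 1))! / (4 ^ (m + l + 1) * (m + l + 1)!) := by
      rw [hGammaArg, gamma_half]
    have hz2m : z ^ (2 * m) = (-1) ^ m * ((k : ℂ) * r) ^ (2 * m) := by
      rw [pow_mul, pow_mul, show z ^ 2 = Complex.I ^ 2 * ((k : ℂ) * r) ^ 2 by rw [hzdef]; ring,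
        Complex.I_sq, ← mul_pow]
    have hnegz : (-z) ^ l = (-Complex.I) ^ l * ((k : ℂ) * r) ^ l := by
      rw [← mul_pow]; congr 1; rw [hzdef]; ring
    have hsign1 : ((-1 : ℂ)) ^ (m + l) * (-1) ^ m = (-1) ^ l := by
      rw [← pow_add, show m + l + m = 2 * m + l by ring, pow_add, pow_mul]
      norm_num
    have hsign2 : (-Complex.I) ^ l * (-1 : ℂ) ^ l = Complex.I ^ l := by
      rw [← mul_pow]; norm_num
    have hsign : (-Complex.I) ^ l * ((-1:ℂ) ^ (m + l) * (-1:ℂ) ^ m) = Complex.I ^ l := by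
      rw [hsign1]; exact hsign2
    have hL : (-z) ^ l * (bC l m * z ^ (2 * m))
        = Complex.I ^ l * (((bR l m : ℝ) : ℂ) * ((k:ℂ) * r) ^ l * ((k:ℂ) * r) ^ (2 * m)) := by
      rw [hnegz, hz2m, ← hsign]
      unfold bC
      ring
    -- real-level Gamma identity
    have e1 : (((m + l + 1))! : ℝ) = ((m:ℝ) + l + 1) * (m + l)! := by
      rw [Nat.factorial_succ]; push_cast; ring
    have e2 : ((2 * (m + l + 1))! : ℝ) = (2 * ((m:ℝ) + l) + 2) * (2 * (m + l) + 1)! := by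
      rw [show 2 * (m + l + 1) = (2 * (m + l) + 1) + 1 by ring, Nat.factorial_succ]
      push_cast; ring
    have e3 : (4 : ℝ) ^ (m + l + 1) = 2 ^ (2 * (m + l + 1)) := by
      rw [show (4 : ℝ) = 2 ^ 2 by norm_num, ← pow_mul]
    have p1 : ((m)! : ℝ) ≠ 0 := by positivity
    have p2 : (((m + l))! : ℝ) ≠ 0 := by positivity
    have p3 : (((2 * (m + l) + 1))! : ℝ) ≠ 0 := by positivity
    have p4 : ((m:ℝ) + l + 1) ≠ 0 := by positivity
    have hGkey : Real.Gamma ((m : ℝ) + l + 3 / 2)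
          * (2 ^ (l + 1) * 2 ^ (2 * m) * (m ! : ℝ) * bR l m) = Real.sqrt Real.pi := by
      rw [hGamma]
      unfold bR
      rw [e1, e2, e3]
      field_simp
      ring
    have hGpos : 0 < Real.Gamma ((m : ℝ) + l + 3 / 2) := by
      rw [hGamma]
      have := Real.sqrt_pos.mpr Real.pi_pos
      positivity
    have hbRpos : 0 < bR l m := by unfold bR; positivity
    have hGne : ((Real.Gamma ((m : ℝ) + l + 3 / 2) : ℝ) : ℂ) ≠ 0 :=
      Complex.ofReal_ne_zero.mpr hGpos.ne'
    have hbRne : ((bR l m : ℝ) : ℂ) ≠ 0 := Complex.ofReal_ne_zero.mpr hbRpos.ne'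
    have hne_m : ((m)! : ℂ) ≠ 0 := Nat.cast_ne_zero.mpr (Nat.factorial_ne_zero _)
    have hGkeyC : ((Real.Gamma ((m : ℝ) + l + 3 / 2) : ℝ) : ℂ)
          * (2 ^ (l + 1) * 2 ^ (2 * m) * ((m)! : ℂ) * ((bR l m : ℝ) : ℂ))
          = ((Real.sqrt Real.pi : ℝ) : ℂ) := by
      exact_mod_cast congrArg (fun t : ℝ => (t : ℂ)) hGkey
    have hsqrtC : ((Real.sqrt Real.pi : ℝ) : ℂ) ≠ 0 := Complex.ofReal_ne_zero.mpr hsqrt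
    have hTm : T m = ((k * r / 2 : ℝ) : ℂ) ^ (2 * m)
        * (2 ^ (l + 1) * 2 ^ (2 * m) * ((bR l m : ℝ) : ℂ)) / ((Real.sqrt Real.pi : ℝ) : ℂ) := by
      simp only [hTdef]
      rw [div_eq_div_iff (mul_ne_zero hne_m hGne) hsqrtC, ← hGkeyC]
      ring
    rw [hL, hTm]
    simp only [hCdef]
    push_cast
    field_simp
    have h12 : ((1:ℂ)/2)^(m*2) * 2^(m*2) = 1 := by rw [← mul_pow]; norm_num
    linear_combination (-((k:ℂ) ^ l * (k:ℂ) ^ (m * 2) * (r:ℂ) ^ l * (r:ℂ) ^ (m * 2))) * h12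
  have hA : Summable (fun m : ℕ => (-z) ^ l * (bC l m * z ^ (2 * m))) :=
    (summable_g l z).mul_left _
  have hAC : Summable (fun m : ℕ => C * T m) := hA.congr hterm
  have hC : C ≠ 0 := by
    rw [hCdef]
    apply mul_ne_zero (mul_ne_zero (pow_ne_zero _ Complex.I_ne_zero) ?_) ?_
    · apply div_ne_zero (Complex.ofReal_ne_zero.mpr hsqrt) (by norm_num)
    · apply pow_ne_zero
      apply Complex.ofReal_ne_zero.mpr
      positivity
  have hT : Summable T := by
    have h2 := hAC.mul_left C⁻¹
    apply h2.congr
    intro m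
    rw [← mul_assoc, inv_mul_cancel₀ hC, one_mul]
  refine ⟨hT, ?_⟩
  have : sphJ l z = (-z) ^ l * gFun l z := by
    rw [sphJ, iter_eq l z hz]
  rw [this, gFun, ← tsum_mul_left, tsum_congr hterm, tsum_mul_left]
end

section
/- Let V ∈ L²(ℝ³; ℝ). Then there exist constants α > 0 and β ≥ 0 (depending only on the L² norm of V) such that for every smooth compactly supported function v : ℝ³ → ℂ, ∫_{ℝ³} |∇v|² dx + ∫_{ℝ³} V |v|² dx ≥ α (∫_{ℝ³} |∇v|² dx + ∫_{ℝ³} |v|² dx) − β ∫_{ℝ³} |v|² dx; that is, the quadratic form a(v, v) = ∫ |∇v|² + V|v|² of the Schrödinger operator −Δ + V satisfies a Gårding (coercivity) inequality. -/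
open MeasureTheory
open scoped NNReal ENNReal

private lemma garding_amgm {I A G L : ℝ} (hI : 0 ≤ I) (hA : 0 ≤ A) (hG : 0 ≤ G) (hL : 0 ≤ L)
    (h : I^4 ≤ L * A * G^3) : I ≤ G/2 + 27/32 * (L * A) := by
  have hS : 0 ≤ G/2 + 27/32*(L*A) := by positivity
  have key : L*A*G^3 ≤ (G/2 + 27/32*(L*A))^4 := by
    nlinarith [mul_nonneg (sq_nonneg (27/8*(L*A) - 2/3*G))
      (by positivity : (0:ℝ) ≤ (27/8*(L*A))^2 + 14*(27/8*(L*A))*(2/3*G) + 81*(2/3*G)^2)]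
  exact (pow_le_pow_iff_left₀ hI hS (by norm_num)).mp (le_trans h key)

private lemma garding_lint_ne_top {α : Type*} [MeasurableSpace α] {μ : Measure α}
    {F : Type*} [NormedAddCommGroup F] {f : α → F} (hf : MemLp f 2 μ) :
    (∫⁻ x, (‖f x‖₊ : ℝ≥0∞) ^ (2:ℕ) ∂μ) ≠ ⊤ := by
  have h := lintegral_rpow_enorm_lt_top_of_eLpNorm_lt_top (f := f) (p := 2)
    two_ne_zero (by norm_num) hf.2
  refine ne_of_lt ?_
  convert h using 1
  refine lintegral_congr fun x => ?_
  rw [ENNReal.toReal_ofNat, ← ENNReal.rpow_natCast]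
  norm_num
  rfl

private lemma garding_integral_pow_eq {α : Type*} [MeasurableSpace α] {μ : Measure α}
    {F : Type*} [NormedAddCommGroup F] {f : α → F} (hf : AEStronglyMeasurable f μ) (n : ℕ) :
    ∫ x, ‖f x‖ ^ n ∂μ = (∫⁻ x, (‖f x‖₊ : ℝ≥0∞) ^ n ∂μ).toReal := by
  rw [integral_eq_lintegral_of_nonneg_ae (Filter.Eventually.of_forall fun x => by positivity)
    ((hf.norm.aemeasurable.pow_const n).aestronglyMeasurable)]
  congr 1
  refine lintegral_congr fun x => ?_
  rw [ENNReal.ofReal_pow (norm_nonneg _), ofReal_norm, enorm_eq_nnnorm]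

/-- Gårding (coercivity) inequality for the quadratic form of the
Schrödinger operator `−Δ + V` with a real potential `V ∈ L²(ℝ³)`: there exist
`α > 0` and `β ≥ 0` such that for every smooth compactly supported
`v : ℝ³ → ℂ`,
`∫ |∇v|² + ∫ V |v|² ≥ α (∫ |∇v|² + ∫ |v|²) − β ∫ |v|²`. -/
theorem stmt_17 (V : EuclideanSpace ℝ (Fin 3) → ℝ) (hV : MemLp V 2 volume) :
    ∃ α β : ℝ, 0 < α ∧ 0 ≤ β ∧
      ∀ v : EuclideanSpace ℝ (Fin 3) → ℂ, ContDiff ℝ (⊤ : ℕ∞) v → HasCompactSupport v →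
        (∫ x, ‖fderiv ℝ v x‖ ^ 2) + (∫ x, V x * ‖v x‖ ^ 2)
          ≥ α * ((∫ x, ‖fderiv ℝ v x‖ ^ 2) + ∫ x, ‖v x‖ ^ 2)
            - β * ∫ x, ‖v x‖ ^ 2 := by
  classical
  set C : ℝ≥0 :=
    MeasureTheory.SNormLESNormFDerivOfEqConst (E := EuclideanSpace ℝ (Fin 3)) ℂ volume
      ((2:ℝ≥0):ℝ) with hCdef
  set Kc : ℝ≥0∞ := ∫⁻ x, (‖V x‖₊ : ℝ≥0∞) ^ (2:ℕ) with hKcdef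
  have hKtop : Kc ≠ ⊤ := garding_lint_ne_top hV
  set L : ℝ := Kc.toReal ^ 2 * (C:ℝ) ^ 6 with hLdef
  have hL0 : 0 ≤ L := by positivity
  refine ⟨1/2, 27/32 * L + 1/2, by norm_num, by positivity, ?_⟩
  intro v hv hcs
  have hvc : Continuous v := hv.continuous
  have hdc : Continuous (fderiv ℝ v) := hv.continuous_fderiv (by simp)
  have hdcs : HasCompactSupport (fderiv ℝ v) := hcs.fderiv (𝕜 := ℝ)
  have hv2 : MemLp v 2 volume := hvc.memLp_of_hasCompactSupport hcs
  have hd2 : MemLp (fderiv ℝ v) 2 volume := hdc.memLp_of_hasCompactSupport hdcs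
  have mv : AEMeasurable (fun x => (‖v x‖₊ : ℝ≥0∞)) volume :=
    hvc.measurable.nnnorm.coe_nnreal_ennreal.aemeasurable
  have mV : AEMeasurable (fun x => (‖V x‖₊ : ℝ≥0∞)) volume :=
    hV.1.aemeasurable.nnnorm.coe_nnreal_ennreal
  have conj22 : (2:ℝ).HolderConjugate 2 := by constructor <;> norm_num
  set A' : ℝ≥0∞ := ∫⁻ x, (‖v x‖₊ : ℝ≥0∞) ^ (2:ℕ) with hA'def
  set B' : ℝ≥0∞ := ∫⁻ x, (‖v x‖₊ : ℝ≥0∞) ^ (4:ℕ) with hB'def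
  set D' : ℝ≥0∞ := ∫⁻ x, (‖v x‖₊ : ℝ≥0∞) ^ (6:ℕ) with hD'def
  set G' : ℝ≥0∞ := ∫⁻ x, (‖fderiv ℝ v x‖₊ : ℝ≥0∞) ^ (2:ℕ) with hG'def
  set I' : ℝ≥0∞ := ∫⁻ x, (‖V x‖₊ : ℝ≥0∞) * (‖v x‖₊ : ℝ≥0∞) ^ (2:ℕ) with hI'def
  -- Hölder 1 : I' ≤ √Kc √B'
  have h1 : I' ≤ Kc ^ ((1:ℝ)/2) * B' ^ ((1:ℝ)/2) := by
    have h := ENNReal.lintegral_mul_le_Lp_mul_Lq volume conj22 mV (mv.pow_const (2:ℕ))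
    simp only [Pi.mul_apply] at h
    calc I' = ∫⁻ x, (‖V x‖₊ : ℝ≥0∞) * ((‖v x‖₊ : ℝ≥0∞) ^ (2:ℕ)) := rfl
      _ ≤ (∫⁻ x, (‖V x‖₊ : ℝ≥0∞) ^ (2:ℝ)) ^ ((1:ℝ)/2)
            * (∫⁻ x, ((‖v x‖₊ : ℝ≥0∞) ^ (2:ℕ)) ^ (2:ℝ)) ^ ((1:ℝ)/2) := by
          simpa using h
      _ = Kc ^ ((1:ℝ)/2) * B' ^ ((1:ℝ)/2) := by
          rw [hKcdef, hB'def]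
          congr 2
          · exact lintegral_congr fun x => by rw [← ENNReal.rpow_natCast]; norm_num
          · exact lintegral_congr fun x => by
              rw [← ENNReal.rpow_natCast (‖v x‖₊ : ℝ≥0∞) 2, ← ENNReal.rpow_mul,
                ← ENNReal.rpow_natCast (‖v x‖₊ : ℝ≥0∞) 4]
              norm_num
  -- Hölder 2 : B' ≤ √A' √D'
  have h2 : B' ≤ A' ^ ((1:ℝ)/2) * D' ^ ((1:ℝ)/2) := by
    have h := ENNReal.lintegral_mul_le_Lp_mul_Lq volume conj22 mv (mv.pow_const (3:ℕ))
    simp only [Pi.mul_apply] at h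
    calc B' = ∫⁻ x, (‖v x‖₊ : ℝ≥0∞) * ((‖v x‖₊ : ℝ≥0∞) ^ (3:ℕ)) := by
          exact lintegral_congr fun x => by ring
      _ ≤ (∫⁻ x, (‖v x‖₊ : ℝ≥0∞) ^ (2:ℝ)) ^ ((1:ℝ)/2)
            * (∫⁻ x, ((‖v x‖₊ : ℝ≥0∞) ^ (3:ℕ)) ^ (2:ℝ)) ^ ((1:ℝ)/2) := by simpa using h
      _ = A' ^ ((1:ℝ)/2) * D' ^ ((1:ℝ)/2) := by
          rw [hA'def, hD'def]
          congr 2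
          · exact lintegral_congr fun x => by rw [← ENNReal.rpow_natCast]; norm_num
          · exact lintegral_congr fun x => by
              rw [← ENNReal.rpow_natCast (‖v x‖₊ : ℝ≥0∞) 3, ← ENNReal.rpow_mul,
                ← ENNReal.rpow_natCast (‖v x‖₊ : ℝ≥0∞) 6]
              norm_num
  -- Sobolev : D'^(1/6) ≤ C · G'^(1/2)
  have h3 : D' ^ ((1:ℝ)/6) ≤ (C : ℝ≥0∞) * G' ^ ((1:ℝ)/2) := by
    have h := eLpNorm_le_eLpNorm_fderiv_of_eq (μ := (volume : Measure (EuclideanSpace ℝ (Fin 3))))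
      (u := v) (p := (2:ℝ≥0)) (p' := (6:ℝ≥0)) (hv.of_le (by simp)) hcs (by norm_num) (by simp)
      (by simp only [finrank_euclideanSpace, Fintype.card_fin]; norm_num)
    rw [eLpNorm_eq_lintegral_rpow_enorm_toReal (by norm_num) (by norm_num),
      eLpNorm_eq_lintegral_rpow_enorm_toReal (by norm_num) (by norm_num)] at h
    simp only [ENNReal.coe_ofNat, ENNReal.toReal_ofNat, enorm_eq_nnnorm] at h
    have e6 : D' = ∫⁻ x, (‖v x‖₊ : ℝ≥0∞) ^ (6:ℝ) := by
      rw [hD'def]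
      exact lintegral_congr fun x => by rw [← ENNReal.rpow_natCast]; norm_num
    have e2 : G' = ∫⁻ x, (‖fderiv ℝ v x‖₊ : ℝ≥0∞) ^ (2:ℝ) := by
      rw [hG'def]
      exact lintegral_congr fun x => by rw [← ENNReal.rpow_natCast]; norm_num
    rw [e6, e2]
    exact h
  -- rpow algebra helpers
  have sq4 : ∀ x : ℝ≥0∞, (x ^ ((1:ℝ)/2)) ^ (4:ℕ) = x ^ (2:ℕ) := fun x => by
    rw [← ENNReal.rpow_natCast (x ^ ((1:ℝ)/2)) 4, ← ENNReal.rpow_mul,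
      ← ENNReal.rpow_natCast x 2]
    norm_num
  have sq2 : ∀ x : ℝ≥0∞, (x ^ ((1:ℝ)/2)) ^ (2:ℕ) = x := fun x => by
    rw [← ENNReal.rpow_natCast (x ^ ((1:ℝ)/2)) 2, ← ENNReal.rpow_mul]
    norm_num
  have sq6 : ∀ x : ℝ≥0∞, (x ^ ((1:ℝ)/2)) ^ (6:ℕ) = x ^ (3:ℕ) := fun x => by
    rw [← ENNReal.rpow_natCast (x ^ ((1:ℝ)/2)) 6, ← ENNReal.rpow_mul,
      ← ENNReal.rpow_natCast x 3]
    norm_num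
  have s6 : ∀ x : ℝ≥0∞, (x ^ ((1:ℝ)/6)) ^ (6:ℕ) = x := fun x => by
    rw [← ENNReal.rpow_natCast (x ^ ((1:ℝ)/6)) 6, ← ENNReal.rpow_mul]
    norm_num
  -- combination in ℝ≥0∞
  have hD : D' ≤ (C : ℝ≥0∞) ^ (6:ℕ) * G' ^ (3:ℕ) := by
    calc D' = (D' ^ ((1:ℝ)/6)) ^ (6:ℕ) := (s6 D').symm
      _ ≤ ((C : ℝ≥0∞) * G' ^ ((1:ℝ)/2)) ^ (6:ℕ) := pow_le_pow_left₀ zero_le h3 6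
      _ = (C : ℝ≥0∞) ^ (6:ℕ) * G' ^ (3:ℕ) := by rw [mul_pow, sq6]
  have hI4 : I' ^ (4:ℕ) ≤ Kc ^ (2:ℕ) * B' ^ (2:ℕ) := by
    calc I' ^ (4:ℕ) ≤ (Kc ^ ((1:ℝ)/2) * B' ^ ((1:ℝ)/2)) ^ (4:ℕ) :=
          pow_le_pow_left₀ zero_le h1 4
      _ = Kc ^ (2:ℕ) * B' ^ (2:ℕ) := by rw [mul_pow, sq4, sq4]
  have hB2 : B' ^ (2:ℕ) ≤ A' * D' := by
    calc B' ^ (2:ℕ) ≤ (A' ^ ((1:ℝ)/2) * D' ^ ((1:ℝ)/2)) ^ (2:ℕ) :=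
          pow_le_pow_left₀ zero_le h2 2
      _ = A' * D' := by rw [mul_pow, sq2, sq2]
  have hmain : I' ^ (4:ℕ) ≤ Kc ^ (2:ℕ) * ((C : ℝ≥0∞) ^ (6:ℕ) * (A' * G' ^ (3:ℕ))) := by
    calc I' ^ (4:ℕ) ≤ Kc ^ (2:ℕ) * B' ^ (2:ℕ) := hI4
      _ ≤ Kc ^ (2:ℕ) * (A' * D') := by gcongr
      _ ≤ Kc ^ (2:ℕ) * (A' * ((C : ℝ≥0∞) ^ (6:ℕ) * G' ^ (3:ℕ))) := by gcongr
      _ = Kc ^ (2:ℕ) * ((C : ℝ≥0∞) ^ (6:ℕ) * (A' * G' ^ (3:ℕ))) := by ring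
  -- finiteness
  have hAtop : A' ≠ ⊤ := garding_lint_ne_top hv2
  have hGtop : G' ≠ ⊤ := garding_lint_ne_top hd2
  have hRHStop : Kc ^ (2:ℕ) * ((C : ℝ≥0∞) ^ (6:ℕ) * (A' * G' ^ (3:ℕ))) ≠ ⊤ := by
    apply ENNReal.mul_ne_top (ENNReal.pow_ne_top hKtop)
    apply ENNReal.mul_ne_top (ENNReal.pow_ne_top ENNReal.coe_ne_top)
    exact ENNReal.mul_ne_top hAtop (ENNReal.pow_ne_top hGtop)
  -- to real numbers
  have hreal : I'.toReal ^ 4 ≤ L * A'.toReal * G'.toReal ^ 3 := by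
    have h := ENNReal.toReal_mono hRHStop hmain
    rw [ENNReal.toReal_pow, ENNReal.toReal_mul, ENNReal.toReal_mul, ENNReal.toReal_mul,
      ENNReal.toReal_pow, ENNReal.toReal_pow, ENNReal.toReal_pow, ENNReal.coe_toReal] at h
    calc I'.toReal ^ 4 ≤ Kc.toReal ^ 2 * ((C:ℝ) ^ 6 * (A'.toReal * G'.toReal ^ 3)) := h
      _ = L * A'.toReal * G'.toReal ^ 3 := by rw [hLdef]; ring
  -- identify real integrals
  have hAeq : ∫ x, ‖v x‖ ^ 2 = A'.toReal := garding_integral_pow_eq hvc.aestronglyMeasurable 2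
  have hGeq : ∫ x, ‖fderiv ℝ v x‖ ^ 2 = G'.toReal :=
    garding_integral_pow_eq hdc.aestronglyMeasurable 2
  have hw : HasCompactSupport (fun x => ‖v x‖ ^ 2) := by
    apply hcs.comp_left (g := fun t : ℂ => ‖t‖ ^ 2)
    simp
  have hwc : Continuous (fun x => ‖v x‖ ^ 2) := (hvc.norm).pow 2
  have hm : AEStronglyMeasurable (fun x : EuclideanSpace ℝ (Fin 3) => ‖V x‖ * ‖v x‖ ^ 2)
      volume := hV.1.norm.mul hwc.aestronglyMeasurable
  have hIeq : ∫ x, ‖V x‖ * ‖v x‖ ^ 2 = I'.toReal := by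
    rw [integral_eq_lintegral_of_nonneg_ae (Filter.Eventually.of_forall fun x => by positivity)
      hm]
    congr 1
    refine lintegral_congr fun x => ?_
    rw [ENNReal.ofReal_mul (norm_nonneg _), ENNReal.ofReal_pow (norm_nonneg _),
      ofReal_norm, ofReal_norm, enorm_eq_nnnorm, enorm_eq_nnnorm]
  -- integrability
  have hVv_int : Integrable (fun x => V x * ‖v x‖ ^ 2) volume := by
    simpa [smul_eq_mul] using
      (hV.locallyIntegrable one_le_two).integrable_smul_right_of_hasCompactSupport hwc hw
  have habs_int : Integrable (fun x => ‖V x‖ * ‖v x‖ ^ 2) volume := by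
    simpa [smul_eq_mul] using
      ((hV.norm).locallyIntegrable one_le_two).integrable_smul_right_of_hasCompactSupport hwc hw
  have hlow : -∫ x, ‖V x‖ * ‖v x‖ ^ 2 ≤ ∫ x, V x * ‖v x‖ ^ 2 := by
    rw [← integral_neg]
    refine integral_mono habs_int.neg hVv_int fun x => ?_
    have h2 : (0:ℝ) ≤ ‖v x‖ ^ 2 := by positivity
    have h1 : -‖V x‖ ≤ V x := by rw [Real.norm_eq_abs]; exact neg_abs_le _
    simpa using mul_le_mul_of_nonneg_right h1 h2
  -- AM–GM
  have hkey : I'.toReal ≤ G'.toReal / 2 + 27/32 * (L * A'.toReal) :=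
    garding_amgm ENNReal.toReal_nonneg ENNReal.toReal_nonneg ENNReal.toReal_nonneg hL0 hreal
  rw [ge_iff_le, hAeq, hGeq]
  rw [hAeq, hGeq] at *
  rw [hIeq] at hlow
  linarith
end
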